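/- Let ρ be a density matrix on ℂ^d and let U and V be d×d unitary matrices, regarded as the unitary channels ρ ↦ UρU† and ρ ↦ VρV†. Then Q_ρ(U)·Q_ρ(V) ≥ (1/4) |tr([U, V†] ρ)|². -/

import Mathlib

/-!
Write `r = √ρ`, `⟨K⟩ = tr(Kρ)` and `S_K = {r, K} - 2⟨K⟩ r` (`centeredAnticommutator r K`).
In the Hilbert–Schmidt inner product the variance splits as `4 V_ρ(K) = ‖[r, K]‖² + ‖S_K‖²`;
since `I_ρ(K) = ½ ‖[r, K]‖²`, this gives `Q_ρ(K) = ½ ‖[r, K]‖ ‖S_K‖`. On the other hand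
`tr([U, W] ρ) = tr([r, U] S_W)` for every `W`, and `S_{V†} = (S_V)†`, so Cauchy–Schwarz bounds
`|tr([U, V†] ρ)|` by `‖[r, U]‖ ‖S_V‖`; since `tr([V, U†] ρ)` is the complex conjugate of
`tr([U, V†] ρ)`, it is also bounded by `‖[r, V]‖ ‖S_U‖`. The product of the two bounds is the claim.
-/

open Matrix
open scoped ComplexOrder

noncomputable section

def Matrix.PosSemidef.sqrt {n 𝕜 : Type*} [Fintype n] [DecidableEq n] [RCLike 𝕜]
    {A : Matrix n n 𝕜} (hA : A.PosSemidef) : Matrix n n 𝕜 :=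
  hA.1.eigenvectorUnitary.1 * diagonal ((↑) ∘ (√·) ∘ hA.1.eigenvalues) *
    (star hA.1.eigenvectorUnitary : Matrix n n 𝕜)

def opVar {d : ℕ} (ρ K : Matrix (Fin d) (Fin d) ℂ) : ℝ :=
  (((Kᴴ * K + K * Kᴴ) * ρ).trace).re / 2 - ‖(K * ρ).trace‖ ^ 2

def chanVar {d n : ℕ} (ρ : Matrix (Fin d) (Fin d) ℂ)
    (K : Fin n → Matrix (Fin d) (Fin d) ℂ) : ℝ :=
  ∑ i, opVar ρ (K i)

def chanSkew {d n : ℕ} (ρ : Matrix (Fin d) (Fin d) ℂ) (hρ : ρ.PosSemidef)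
    (K : Fin n → Matrix (Fin d) (Fin d) ℂ) : ℝ :=
  (1 / 2) * ∑ i,
    (((hρ.sqrt * K i - K i * hρ.sqrt)ᴴ * (hρ.sqrt * K i - K i * hρ.sqrt)).trace).re

def chanQ {d n : ℕ} (ρ : Matrix (Fin d) (Fin d) ℂ) (hρ : ρ.PosSemidef)
    (K : Fin n → Matrix (Fin d) (Fin d) ℂ) : ℝ :=
  Real.sqrt ((chanVar ρ K) ^ 2 - (chanVar ρ K - chanSkew ρ hρ K) ^ 2)

namespace Matrix

variable {m n 𝕜 : Type*} [Fintype m] [Fintype n] [RCLike 𝕜]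

theorem trace_conjTranspose_mul_eq_inner (A B : Matrix m n 𝕜) :
    (Aᴴ * B).trace = inner 𝕜 (WithLp.toLp 2 A.vec) (WithLp.toLp 2 B.vec) := by
  rw [← star_vec_dotProduct_vec, EuclideanSpace.inner_toLp_toLp, dotProduct_comm]

theorem re_trace_conjTranspose_mul_self (A : Matrix m n 𝕜) :
    RCLike.re (Aᴴ * A).trace = ‖WithLp.toLp 2 A.vec‖ ^ 2 := by
  rw [trace_conjTranspose_mul_eq_inner, inner_self_eq_norm_sq]

theorem re_trace_conjTranspose_mul_self_nonneg (A : Matrix m n 𝕜) :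
    0 ≤ RCLike.re (Aᴴ * A).trace := by
  rw [re_trace_conjTranspose_mul_self]
  positivity

theorem re_trace_mul_conjTranspose_self (A : Matrix n n 𝕜) :
    RCLike.re (A * Aᴴ).trace = RCLike.re (Aᴴ * A).trace := by
  rw [trace_mul_comm]

theorem norm_trace_conjTranspose_mul_sq_le (A B : Matrix m n 𝕜) :
    ‖(Aᴴ * B).trace‖ ^ 2 ≤ RCLike.re (Aᴴ * A).trace * RCLike.re (Bᴴ * B).trace := by
  rw [re_trace_conjTranspose_mul_self, re_trace_conjTranspose_mul_self, ← mul_pow,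
    trace_conjTranspose_mul_eq_inner]
  gcongr
  exact norm_inner_le_norm _ _

theorem norm_trace_mul_sq_le (A B : Matrix n n 𝕜) :
    ‖(A * B).trace‖ ^ 2 ≤ RCLike.re (Aᴴ * A).trace * RCLike.re (Bᴴ * B).trace := by
  simpa [re_trace_mul_conjTranspose_self] using norm_trace_conjTranspose_mul_sq_le Aᴴ B

namespace PosSemidef

variable [DecidableEq n] {A : Matrix n n 𝕜} (hA : A.PosSemidef)
include hA

theorem sqrt_mul_self : hA.sqrt * hA.sqrt = A := by
  have hD : diagonal ((RCLike.ofReal ∘ (√·) ∘ hA.1.eigenvalues : n → 𝕜)) *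
      diagonal (RCLike.ofReal ∘ (√·) ∘ hA.1.eigenvalues) =
      diagonal (RCLike.ofReal ∘ hA.1.eigenvalues) := by
    rw [diagonal_mul_diagonal]
    congr 1; funext i
    simp only [Function.comp_apply]
    rw [← RCLike.ofReal_mul, Real.mul_self_sqrt (hA.eigenvalues_nonneg i)]
  conv_rhs => rw [hA.1.spectral_theorem, Unitary.conjStarAlgAut_apply]
  rw [sqrt]
  simp only [mul_assoc]
  rw [← mul_assoc (star hA.1.eigenvectorUnitary : Matrix n n 𝕜), Unitary.coe_star_mul_self,
    one_mul, ← mul_assoc _ (diagonal _) (star _ : Matrix n n 𝕜), hD]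

theorem conjTranspose_sqrt : hA.sqrtᴴ = hA.sqrt := by
  rw [sqrt, conjTranspose_mul, conjTranspose_mul, diagonal_conjTranspose]
  simp only [← star_eq_conjTranspose, star_star, mul_assoc]
  congr 3
  ext i
  simp

end PosSemidef

end Matrix

section

variable {n 𝕜 : Type*} [Fintype n] [RCLike 𝕜]

def centeredAnticommutator (r K : Matrix n n 𝕜) : Matrix n n 𝕜 :=
  r * K + K * r - (2 * (K * (r * r)).trace) • r

variable {r : Matrix n n 𝕜}

theorem trace_conjTranspose_mul_mul_self (hr : rᴴ = r) (K : Matrix n n 𝕜) :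
    (Kᴴ * (r * r)).trace = star (K * (r * r)).trace := by
  rw [← trace_conjTranspose, conjTranspose_mul, conjTranspose_mul, hr, trace_mul_comm]

theorem conjTranspose_centeredAnticommutator (hr : rᴴ = r) (K : Matrix n n 𝕜) :
    (centeredAnticommutator r K)ᴴ = centeredAnticommutator r Kᴴ := by
  rw [centeredAnticommutator, centeredAnticommutator, trace_conjTranspose_mul_mul_self hr]
  simp only [conjTranspose_sub, conjTranspose_add, conjTranspose_mul, conjTranspose_smul, hr,
    star_mul', star_ofNat]
  abel

theorem trace_commutator_add_centeredAnticommutator (hr : rᴴ = r) (htr : (r * r).trace = 1)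
    (K : Matrix n n 𝕜) :
    ((r * K - K * r)ᴴ * (r * K - K * r)).trace +
        ((centeredAnticommutator r K)ᴴ * centeredAnticommutator r K).trace =
      2 * ((Kᴴ * K + K * Kᴴ) * (r * r)).trace -
        4 * ((K * (r * r)).trace * star (K * (r * r)).trace) := by
  have h1 : (Kᴴ * (r * (r * K))).trace = (K * (Kᴴ * (r * r))).trace := by
    rw [trace_mul_comm, mul_assoc, trace_mul_comm r, mul_assoc, mul_assoc, trace_mul_comm r,
      mul_assoc, mul_assoc]
  have h2 : (r * (Kᴴ * (K * r))).trace = (Kᴴ * (K * (r * r))).trace := by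
    rw [trace_mul_comm r, mul_assoc, mul_assoc]
  have h3 : (r * (Kᴴ * r)).trace = star (K * (r * r)).trace := by
    rw [trace_mul_comm r, mul_assoc, trace_conjTranspose_mul_mul_self hr]
  have h4 : (r * (r * K)).trace = (K * (r * r)).trace := by
    rw [trace_mul_comm r, mul_assoc, trace_mul_comm r, mul_assoc]
  have h5 : (r * (K * r)).trace = (K * (r * r)).trace := by
    rw [trace_mul_comm r, mul_assoc]
  simp only [centeredAnticommutator, conjTranspose_sub, conjTranspose_add, conjTranspose_mul,
    conjTranspose_smul, hr, sub_mul, mul_sub, add_mul, mul_add, Matrix.smul_mul, Matrix.mul_smul,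
    trace_sub, trace_add, trace_smul, mul_assoc, smul_eq_mul, star_mul', star_ofNat]
  rw [h1, h2, h3, h4, h5, trace_conjTranspose_mul_mul_self hr, htr]
  ring

theorem trace_commutator_mul_eq (U W : Matrix n n 𝕜) :
    ((U * W - W * U) * (r * r)).trace =
      ((r * U - U * r) * centeredAnticommutator r W).trace := by
  have h1 : (r * (U * (r * W))).trace = (U * (r * (W * r))).trace := by
    rw [trace_mul_comm r, mul_assoc, mul_assoc]
  have h2 : (r * (U * (W * r))).trace = (U * (W * (r * r))).trace := by
    rw [trace_mul_comm r, mul_assoc, mul_assoc]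
  have h3 : (r * (U * r)).trace = (U * (r * r)).trace := by
    rw [trace_mul_comm r, mul_assoc]
  have h4 : (U * (r * (r * W))).trace = (W * (U * (r * r))).trace := by
    rw [trace_mul_comm U, mul_assoc, mul_assoc, trace_mul_comm r, mul_assoc, mul_assoc,
      trace_mul_comm r, mul_assoc, mul_assoc]
  simp only [centeredAnticommutator, sub_mul, mul_sub, mul_add, Matrix.mul_smul, trace_sub,
    trace_add, trace_smul, mul_assoc, smul_eq_mul]
  rw [h1, h2, h3, h4]
  ring

theorem norm_trace_commutator_swap {ρ : Matrix n n 𝕜} (hρ : ρᴴ = ρ) (U V : Matrix n n 𝕜) :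
    ‖((V * Uᴴ - Uᴴ * V) * ρ).trace‖ = ‖((U * Vᴴ - Vᴴ * U) * ρ).trace‖ := by
  rw [← norm_star, ← trace_conjTranspose]
  simp only [conjTranspose_mul, conjTranspose_sub, conjTranspose_conjTranspose, hρ]
  rw [trace_mul_comm]

theorem norm_trace_commutator_mul_sq_le (hr : rᴴ = r) (U V : Matrix n n 𝕜) :
    ‖((U * Vᴴ - Vᴴ * U) * (r * r)).trace‖ ^ 2 ≤
      RCLike.re ((r * U - U * r)ᴴ * (r * U - U * r)).trace *
        RCLike.re ((centeredAnticommutator r V)ᴴ * centeredAnticommutator r V).trace := by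
  rw [trace_commutator_mul_eq, ← conjTranspose_centeredAnticommutator hr]
  calc _ ≤ _ := norm_trace_mul_sq_le _ _
    _ = _ := by rw [conjTranspose_conjTranspose, re_trace_mul_conjTranspose_self]

end

theorem Real.le_sqrt_mul_sqrt_of_le_mul {t a b c e : ℝ} (ht : 0 ≤ t) (hab : 0 ≤ a * b)
    (h₁ : t ≤ a * e) (h₂ : t ≤ c * b) : t ≤ √(a * b) * √(c * e) := by
  rw [← Real.sqrt_mul hab]
  apply Real.le_sqrt_of_sq_le
  calc t ^ 2 ≤ (a * e) * (c * b) := by nlinarith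
    _ = a * b * (c * e) := by ring

theorem four_mul_opVar_eq {d : ℕ} {r : Matrix (Fin d) (Fin d) ℂ} (hr : rᴴ = r)
    (htr : (r * r).trace = 1) (K : Matrix (Fin d) (Fin d) ℂ) :
    4 * opVar (r * r) K =
      (((r * K - K * r)ᴴ * (r * K - K * r)).trace).re +
        (((centeredAnticommutator r K)ᴴ * centeredAnticommutator r K).trace).re := by
  have h := congrArg Complex.re (trace_commutator_add_centeredAnticommutator hr htr K)
  rw [Complex.star_def, Complex.mul_conj, Complex.normSq_eq_norm_sq] at h
  simp only [Complex.add_re, Complex.sub_re, Complex.mul_re, Complex.re_ofNat,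
    Complex.im_ofNat, zero_mul, sub_zero] at h
  norm_cast at h
  rw [opVar]
  linarith

theorem chanQ_singleton {d : ℕ} {ρ : Matrix (Fin d) (Fin d) ℂ} (hρ : ρ.PosSemidef)
    (htr : ρ.trace = 1) (K : Matrix (Fin d) (Fin d) ℂ) :
    chanQ ρ hρ ![K] =
      √((((hρ.sqrt * K - K * hρ.sqrt)ᴴ * (hρ.sqrt * K - K * hρ.sqrt)).trace).re *
        (((centeredAnticommutator hρ.sqrt K)ᴴ * centeredAnticommutator hρ.sqrt K).trace).re) / 2 := by
  set r := hρ.sqrt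
  set a := (((r * K - K * r)ᴴ * (r * K - K * r)).trace).re
  set b := (((centeredAnticommutator r K)ᴴ * centeredAnticommutator r K).trace).re
  have hr : r * r = ρ := hρ.sqrt_mul_self
  have hvar : 4 * opVar ρ K = a + b := by
    rw [← hr]
    exact four_mul_opVar_eq hρ.conjTranspose_sqrt (by rw [hr, htr]) K
  simp only [chanQ, chanVar, chanSkew, Fin.sum_univ_one, Matrix.cons_val_zero]
  rw [show opVar ρ K ^ 2 - (opVar ρ K - 1 / 2 * a) ^ 2 = a * b / 4 by
    linear_combination (a / 4) * hvar]
  rw [Real.sqrt_div' _ zero_le_four, show (4 : ℝ) = 2 ^ 2 by norm_num, Real.sqrt_sq zero_le_two]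

theorem stmt_1_general {d : ℕ}
    (ρ : Matrix (Fin d) (Fin d) ℂ) (hρ : ρ.PosSemidef) (htr : ρ.trace = 1)
    (U V : Matrix (Fin d) (Fin d) ℂ) :
    chanQ ρ hρ ![U] * chanQ ρ hρ ![V] ≥
      (1 / 4) * ‖((U * Vᴴ - Vᴴ * U) * ρ).trace‖ ^ 2 := by
  have hUV := norm_trace_commutator_mul_sq_le hρ.conjTranspose_sqrt U V
  have hVU := norm_trace_commutator_mul_sq_le hρ.conjTranspose_sqrt V U
  rw [hρ.sqrt_mul_self] at hUV hVU
  rw [norm_trace_commutator_swap hρ.isHermitian] at hVU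
  rw [chanQ_singleton hρ htr, chanQ_singleton hρ htr]
  have hprod := Real.le_sqrt_mul_sqrt_of_le_mul (sq_nonneg _)
    (mul_nonneg (re_trace_conjTranspose_mul_self_nonneg _)
      (re_trace_conjTranspose_mul_self_nonneg _)) hUV hVU
  simp only [RCLike.re_to_complex] at hprod
  linarith

/-- Product-form uncertainty relation for two unitary channels (Corollary 1):
`Q_ρ(U) Q_ρ(V) ≥ ¼ |tr([U, V†] ρ)|²`. -/
theorem stmt_1 {d : ℕ}
    (ρ : Matrix (Fin d) (Fin d) ℂ) (hρ : ρ.PosSemidef) (htr : ρ.trace = 1)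
    (U V : Matrix (Fin d) (Fin d) ℂ) (hU : Uᴴ * U = 1) (hV : Vᴴ * V = 1) :
    chanQ ρ hρ ![U] * chanQ ρ hρ ![V] ≥
      (1 / 4) * ‖((U * Vᴴ - Vᴴ * U) * ρ).trace‖ ^ 2 :=
  stmt_1_general ρ hρ htr U V
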